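/- arXiv:math/0311318 — 2 statements merged into one kernel-verified Lean document; each statement's English description precedes it below -/
import Mathlib

section
/- Let d ≥ 1, let u ∈ ℤ^d be nonzero, and let f : ℤ^d → ℚ satisfy f(x + u) = f(x) for all x ∈ ℤ^d. Then for every D ∈ ℚ[ℤ^d] such that D ⋆ f is finitely supported, one has D ⋆ f = 0. In particular, if f is summable then its sum S(f) equals 0 in the fraction field of ℚ[ℤ^d]. -/
/-- The convolution `D ⋆ f` of an element `D` of the group algebra `ℚ[ℤ^d]`
with a function `f : ℤ^d → ℚ`: `(D ⋆ f)(x) = Σ_{m ∈ support D} D(m) · f(x - m)`. -/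
noncomputable def conv {d : ℕ} (D : AddMonoidAlgebra ℚ (Fin d → ℤ)) (f : (Fin d → ℤ) → ℚ) :
    (Fin d → ℤ) → ℚ :=
  fun x => ∑ m ∈ D.coeff.support, D.coeff m * f (x - m)

/-!
The convolution `D ⋆ f` of a `u`-periodic `f` is again `u`-periodic, and since `u` has infinite
order, a nonzero `u`-periodic function has the infinite orbit `x + ℕ • u` in its support.
-/

open Function

theorem Function.Periodic.eq_zero_of_finite_support {G M : Type*} [AddCommGroup G]
    [IsAddTorsionFree G] [Zero M] {g : G → M} {u : G} (hg : Periodic g u) (hu : u ≠ 0)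
    (hfin : (support g).Finite) : g = 0 := by
  by_contra hne
  obtain ⟨x, hx⟩ : ∃ x, g x ≠ 0 := by simpa [funext_iff] using hne
  have hinj : Injective fun n : ℕ => x + n • u :=
    (add_right_injective x).comp
      (injective_nsmul_iff_not_isOfFinAddOrder.mpr (not_isOfFinAddOrder_of_isAddTorsionFree hu))
  refine Set.infinite_of_injective_forall_mem hinj (fun n => ?_) hfin
  rwa [mem_support, hg.nsmul n x]

theorem Function.Periodic.conv {d : ℕ} {f : (Fin d → ℤ) → ℚ} {u : Fin d → ℤ} (hf : Periodic f u)
    (D : AddMonoidAlgebra ℚ (Fin d → ℤ)) : Periodic (conv D f) u := fun x =>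
  Finset.sum_congr rfl fun m _ => by rw [add_sub_right_comm, hf]

theorem sum_of_periodic_eq_zero_general {d : ℕ} (u : Fin d → ℤ) (hu : u ≠ 0)
    (f : (Fin d → ℤ) → ℚ) (hf : ∀ x, f (x + u) = f x) :
    (∀ D : AddMonoidAlgebra ℚ (Fin d → ℤ),
        (Function.support (conv D f)).Finite → conv D f = 0) ∧
      (∀ D P : AddMonoidAlgebra ℚ (Fin d → ℤ), D ≠ 0 → (∀ x, P.coeff x = conv D f x) →
        (algebraMap (AddMonoidAlgebra ℚ (Fin d → ℤ))
              (FractionRing (AddMonoidAlgebra ℚ (Fin d → ℤ))) P) /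
            (algebraMap (AddMonoidAlgebra ℚ (Fin d → ℤ))
              (FractionRing (AddMonoidAlgebra ℚ (Fin d → ℤ))) D) = 0) := by
  have conv_eq_zero (D : AddMonoidAlgebra ℚ (Fin d → ℤ)) (hfin : (support (conv D f)).Finite) :
      conv D f = 0 :=
    (Periodic.conv hf D).eq_zero_of_finite_support hu hfin
  refine ⟨conv_eq_zero, fun D P _ hP => ?_⟩
  have hcoeff : ⇑P.coeff = conv D f := funext hP
  have hP0 : P = 0 := by
    have hfin : (support (conv D f)).Finite := hcoeff ▸ P.coeff.hasFiniteSupport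
    ext x
    rw [hP x, conv_eq_zero D hfin]
    rfl
  simp [hP0]

/-- If `f : ℤ^d → ℚ` is periodic with respect to a nonzero `u ∈ ℤ^d`, then every
finitely supported convolution `D ⋆ f` vanishes; in particular, if `f` is summable then
its sum `S(f)` is `0` in the fraction field of `ℚ[ℤ^d]`. -/
theorem sum_of_periodic_eq_zero {d : ℕ} (hd : 1 ≤ d) (u : Fin d → ℤ) (hu : u ≠ 0)
    (f : (Fin d → ℤ) → ℚ) (hf : ∀ x, f (x + u) = f x) :
    (∀ D : AddMonoidAlgebra ℚ (Fin d → ℤ),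
        (Function.support (conv D f)).Finite → conv D f = 0) ∧
      (∀ D P : AddMonoidAlgebra ℚ (Fin d → ℤ), D ≠ 0 → (∀ x, P.coeff x = conv D f x) →
        (algebraMap (AddMonoidAlgebra ℚ (Fin d → ℤ))
              (FractionRing (AddMonoidAlgebra ℚ (Fin d → ℤ))) P) /
            (algebraMap (AddMonoidAlgebra ℚ (Fin d → ℤ))
              (FractionRing (AddMonoidAlgebra ℚ (Fin d → ℤ))) D) = 0) :=
  sum_of_periodic_eq_zero_general u hu f hf
end

section
/- Let d ≥ 1 and let C = {t_1 v_1 + … + t_s v_s : t_i ∈ ℚ, t_i ≥ 0} ⊆ ℚ^d be the rational polyhedral cone generated by vectors v_1, …, v_s ∈ ℤ^d. Then the indicator function 1_{C ∩ ℤ^d} : ℤ^d → ℚ of the set of lattice points of C is summable: there exist finitely many nonzero m_1, …, m_r ∈ ℤ^d such that (∏_{i=1}^r (1 − e^{m_i})) ⋆ 1_{C ∩ ℤ^d} is finitely supported. (This is the paper's Lemma 9.3: the generating function A_σ = Σ_{m ∈ σ̌ ∩ M} e^m is summable.) -/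
/-- `e^m`, the basis element of the group algebra `ℚ[ℤ^d]` corresponding to `m ∈ ℤ^d`. -/
noncomputable def expn {d : ℕ} (m : Fin d → ℤ) : AddMonoidAlgebra ℚ (Fin d → ℤ) :=
  AddMonoidAlgebra.single m 1

section Convolution

variable {d : ℕ}

lemma conv_apply (D : AddMonoidAlgebra ℚ (Fin d → ℤ)) (f : (Fin d → ℤ) → ℚ) (x : Fin d → ℤ) :
    conv D f x = D.coeff.sum fun m c => c * f (x - m) := rfl

lemma conv_sub (D E : AddMonoidAlgebra ℚ (Fin d → ℤ)) (f : (Fin d → ℤ) → ℚ) (x : Fin d → ℤ) :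
    conv (D - E) f x = conv D f x - conv E f x := by
  simp only [conv_apply, AddMonoidAlgebra.coeff_sub]
  exact Finsupp.sum_sub_index fun _ _ _ => sub_mul _ _ _

lemma conv_one (f : (Fin d → ℤ) → ℚ) (x : Fin d → ℤ) : conv 1 f x = f x := by
  rw [conv_apply, AddMonoidAlgebra.one_def, AddMonoidAlgebra.coeff_single,
    Finsupp.sum_single_index (zero_mul _), one_mul, sub_zero]

lemma conv_expn_mul (a : Fin d → ℤ) (D : AddMonoidAlgebra ℚ (Fin d → ℤ))
    (f : (Fin d → ℤ) → ℚ) (x : Fin d → ℤ) :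
    conv (expn a * D) f x = conv D f (x - a) := by
  rw [conv, expn, AddMonoidAlgebra.support_coeff_single_mul _ _ (fun _ => by simp),
    Finset.sum_map]
  refine Finset.sum_congr rfl fun m _ => ?_
  simp [sub_add_eq_sub_sub_swap, sub_right_comm x m a]

lemma conv_prod_one_sub_expn {ι : Type*} [DecidableEq ι] (t : Finset ι) (v : ι → Fin d → ℤ)
    (f : (Fin d → ℤ) → ℚ) (x : Fin d → ℤ) :
    conv (∏ i ∈ t, (1 - expn (v i))) f x
      = ∑ S ∈ t.powerset, (-1) ^ S.card * f (x - ∑ i ∈ S, v i) := by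
  induction t using Finset.induction_on generalizing x with
  | empty => simp [conv_one]
  | @insert a t ha ih =>
    rw [Finset.prod_insert ha, sub_mul, one_mul, conv_sub, conv_expn_mul, ih, ih,
      Finset.sum_powerset_insert ha, sub_eq_add_neg, ← Finset.sum_neg_distrib]
    congr 1
    refine Finset.sum_congr rfl fun S hS => ?_
    have haS : a ∉ S := fun h => ha (Finset.mem_powerset.mp hS h)
    rw [Finset.card_insert_of_notMem haS, Finset.sum_insert haS, pow_succ, sub_add_eq_sub_sub]
    ring

end Convolution

lemma Finset.sum_powerset_neg_one_pow_card_mul_eq_zero {ι R : Type*} [DecidableEq ι] [CommRing R]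
    {t : Finset ι} {i : ι} (hi : i ∈ t) (F : Finset ι → R)
    (hF : ∀ S ⊆ t.erase i, F (insert i S) = F S) :
    ∑ S ∈ t.powerset, (-1) ^ S.card * F S = 0 := by
  rw [← Finset.insert_erase hi, Finset.sum_powerset_insert (Finset.notMem_erase i t),
    ← Finset.sum_add_distrib]
  refine Finset.sum_eq_zero fun S hS => ?_
  have hS' := Finset.mem_powerset.mp hS
  rw [Finset.card_insert_of_notMem fun h => Finset.notMem_erase i t (hS' h), hF S hS', pow_succ]
  ring

section Cone

variable {K n ι : Type*}

def finiteCone [Semiring K] [LE K] [Fintype ι] (v : ι → n → K) : Set (n → K) :=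
  {x | ∃ t : ι → K, (∀ i, 0 ≤ t i) ∧ x = ∑ i, t i • v i}

lemma mem_finiteCone_self [Semiring K] [PartialOrder K] [ZeroLEOneClass K] [Fintype ι]
    (v : ι → n → K) (i : ι) : v i ∈ finiteCone v := by
  classical
  exact ⟨Pi.single i 1, fun j => by by_cases h : j = i <;> simp [h], by simp [Pi.single_apply]⟩

lemma mem_finiteCone_zero [Semiring K] [LE K] {v : Fin 0 → n → K} {x : n → K} :
    x ∈ finiteCone v ↔ x = 0 := by
  simp [finiteCone]

lemma mem_finiteCone_succ [Ring K] [LE K] {s : ℕ} {v : Fin (s + 1) → n → K} {x : n → K} :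
    x ∈ finiteCone v ↔
      ∃ τ : K, 0 ≤ τ ∧ x - τ • v (Fin.last s) ∈ finiteCone (v ∘ Fin.castSucc) := by
  simp only [finiteCone, Set.mem_ofPred_eq, Fin.forall_fin_succ', Fin.sum_univ_castSucc,
    Function.comp_apply, sub_eq_iff_eq_add]
  constructor
  · rintro ⟨t, ⟨ht, hlast⟩, rfl⟩
    exact ⟨t (Fin.last s), hlast, t ∘ Fin.castSucc, ht, rfl⟩
  · rintro ⟨τ, hτ, t, ht, rfl⟩
    exact ⟨Fin.snoc t τ, ⟨by simpa using ht, by simpa using hτ⟩, by simp⟩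

lemma exists_finset_forall_dotProduct_nonneg_iff_eq_zero [Ring K] [PartialOrder K]
    [IsOrderedRing K] [Fintype n] :
    ∃ A : Finset (n → K), ∀ x, (∀ a ∈ A, 0 ≤ a ⬝ᵥ x) ↔ x = 0 := by
  classical
  refine ⟨Finset.univ.image (fun j => Pi.single j 1) ∪
    Finset.univ.image (fun j => -Pi.single j 1),
    fun x => ⟨fun h => funext fun j => ?_, by rintro rfl; simp⟩⟩
  have h₁ := h (Pi.single j 1) (by simp)
  have h₂ := h (-Pi.single j 1) (by simp)
  simp only [neg_dotProduct, single_dotProduct, one_mul, neg_nonneg] at h₁ h₂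
  exact le_antisymm h₂ h₁

end Cone

section FourierMotzkin

variable {K : Type*} [Field K] [LinearOrder K] [IsStrictOrderedRing K]

lemma exists_nonneg_forall_mul_le_iff {α : Type*} (A : Finset α) (p q : α → K) :
    (∃ τ, 0 ≤ τ ∧ ∀ a ∈ A, τ * q a ≤ p a) ↔
      (∀ a ∈ A, 0 ≤ q a → 0 ≤ p a) ∧
        ∀ a ∈ A, ∀ b ∈ A, 0 < q a → q b < 0 → q b * p a ≤ q a * p b := by
  constructor
  · rintro ⟨τ, hτ, h⟩
    refine ⟨fun a ha hqa => (mul_nonneg hτ hqa).trans (h a ha), fun a ha b hb hqa hqb => ?_⟩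
    nlinarith [h a ha, h b hb]
  · rintro ⟨hzero, hpair⟩
    -- `τ` is the largest of the lower bounds `p b / q b` (for `q b < 0`) and `0`.
    set L := insert 0 ((A.filter (q · < 0)).image fun b => p b / q b)
    have hL : L.Nonempty := Finset.insert_nonempty _ _
    refine ⟨L.max' hL, L.le_max' 0 (Finset.mem_insert_self _ _), fun a ha => ?_⟩
    rcases lt_trichotomy (q a) 0 with hqa | hqa | hqa
    · have : p a / q a ≤ L.max' hL := L.le_max' _ (Finset.mem_insert_of_mem
        (Finset.mem_image_of_mem _ (Finset.mem_filter.mpr ⟨ha, hqa⟩)))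
      exact (div_le_iff_of_neg hqa).mp this
    · simpa [hqa] using hzero a ha hqa.ge
    · rcases Finset.mem_insert.mp (L.max'_mem hL) with h0 | hmem
      · simpa [h0] using hzero a ha hqa.le
      · obtain ⟨b, hb, hbτ⟩ := Finset.mem_image.mp hmem
        obtain ⟨hbA, hqb⟩ := Finset.mem_filter.mp hb
        rw [← hbτ, div_mul_eq_mul_div, div_le_iff_of_neg hqb]
        linarith [hpair a ha b hbA hqa hqb]

variable {n : Type*} [Fintype n]

def fourierMotzkin [DecidableEq (n → K)] (A : Finset (n → K)) (u : n → K) : Finset (n → K) :=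
  A.filter (fun a => 0 ≤ a ⬝ᵥ u) ∪
    ((A ×ˢ A).filter fun ab => 0 < ab.1 ⬝ᵥ u ∧ ab.2 ⬝ᵥ u < 0).image
      fun ab => (ab.1 ⬝ᵥ u) • ab.2 - (ab.2 ⬝ᵥ u) • ab.1

lemma forall_mem_fourierMotzkin_iff [DecidableEq (n → K)] (A : Finset (n → K)) (u x : n → K) :
    (∀ b ∈ fourierMotzkin A u, 0 ≤ b ⬝ᵥ x) ↔
      ∃ τ : K, 0 ≤ τ ∧ ∀ a ∈ A, 0 ≤ a ⬝ᵥ (x - τ • u) := by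
  have hshift : ∀ (τ : K) (a : n → K), 0 ≤ a ⬝ᵥ (x - τ • u) ↔ τ * (a ⬝ᵥ u) ≤ a ⬝ᵥ x :=
    fun τ a => by rw [dotProduct_sub, dotProduct_smul, smul_eq_mul, sub_nonneg]
  simp only [hshift]
  refine Iff.trans ?_ (exists_nonneg_forall_mul_le_iff A (· ⬝ᵥ x) (· ⬝ᵥ u)).symm
  simp only [fourierMotzkin, Finset.forall_mem_union, Finset.forall_mem_image, Finset.mem_filter,
    Finset.mem_product, Prod.forall, and_imp, sub_dotProduct, smul_dotProduct, smul_eq_mul,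
    sub_nonneg]
  exact and_congr_right fun _ => ⟨fun h a ha b hb => h a b ha hb, fun h a b ha hb => h a ha b hb⟩

theorem exists_finset_mem_finiteCone_iff (s : ℕ) (v : Fin s → n → K) :
    ∃ A : Finset (n → K), ∀ x, x ∈ finiteCone v ↔ ∀ a ∈ A, 0 ≤ a ⬝ᵥ x := by
  classical
  induction s with
  | zero =>
    obtain ⟨A, hA⟩ := exists_finset_forall_dotProduct_nonneg_iff_eq_zero (K := K) (n := n)
    exact ⟨A, fun x => by rw [mem_finiteCone_zero, hA]⟩
  | succ s ih =>
    obtain ⟨A, hA⟩ := ih (v ∘ Fin.castSucc)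
    exact ⟨fourierMotzkin A (v (Fin.last s)), fun x => by
      simp only [mem_finiteCone_succ, hA, forall_mem_fourierMotzkin_iff]⟩

end FourierMotzkin

section Geometry

variable {K : Type*} [Field K] [LinearOrder K] [IsStrictOrderedRing K]
  {n ι : Type*} [Fintype n] [Fintype ι]

lemma mul_dotProduct_le_dotProduct_sum {a : n → K} {v : ι → n → K} (hav : ∀ i, 0 ≤ a ⬝ᵥ v i)
    {t : ι → K} (ht : ∀ i, 0 ≤ t i) (i : ι) :
    t i * a ⬝ᵥ v i ≤ a ⬝ᵥ ∑ k, t k • v k := by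
  simp only [dotProduct_sum, dotProduct_smul, smul_eq_mul]
  exact Finset.single_le_sum (f := fun k => t k * a ⬝ᵥ v k)
    (fun k _ => mul_nonneg (ht k) (hav k)) (Finset.mem_univ i)

lemma exists_bound_of_forall_exists_dotProduct_lt {A : Finset (n → K)} {v : ι → n → K}
    (hAv : ∀ a ∈ A, ∀ i, 0 ≤ a ⬝ᵥ v i) (w : n → K) :
    ∃ N : n → K, ∀ y ∈ finiteCone v,
      (∀ i, v i ≠ 0 → ∃ a ∈ A, 0 < a ⬝ᵥ v i ∧ a ⬝ᵥ y < a ⬝ᵥ w) → ∀ c, |y c| ≤ N c := by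
  set T := ∑ a ∈ A, ∑ i, |a ⬝ᵥ w / a ⬝ᵥ v i|
  refine ⟨fun c => T * ∑ i, |v i c|, ?_⟩
  rintro _ ⟨t, ht, rfl⟩ hnear c
  have hcoeff : ∀ i, v i ≠ 0 → t i ≤ T := by
    intro i hi
    obtain ⟨a, ha, hpos, hlt⟩ := hnear i hi
    have := mul_dotProduct_le_dotProduct_sum (hAv a ha) ht i
    calc t i ≤ a ⬝ᵥ w / a ⬝ᵥ v i := (le_div_iff₀ hpos).2 (by linarith)
      _ ≤ ∑ i, |a ⬝ᵥ w / a ⬝ᵥ v i| :=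
        (le_abs_self _).trans (Finset.single_le_sum (f := fun i => |a ⬝ᵥ w / a ⬝ᵥ v i|)
          (fun _ _ => abs_nonneg _) (Finset.mem_univ i))
      _ ≤ T := Finset.single_le_sum (f := fun a => ∑ i, |a ⬝ᵥ w / a ⬝ᵥ v i|)
        (fun _ _ => Finset.sum_nonneg fun _ _ => abs_nonneg _) ha
  calc |(∑ k, t k • v k) c| = |∑ k, t k * v k c| := by simp [Finset.sum_apply]
    _ ≤ ∑ k, |t k * v k c| := Finset.abs_sum_le_sum_abs _ _
    _ ≤ ∑ k, T * |v k c| := Finset.sum_le_sum fun k _ => by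
      rw [abs_mul, abs_of_nonneg (ht k)]
      by_cases hk : v k = 0
      · simp [hk]
      · exact mul_le_mul_of_nonneg_right (hcoeff k hk) (abs_nonneg _)
    _ = T * ∑ k, |v k c| := (Finset.mul_sum _ _ _).symm

lemma forall_dotProduct_sub_sum_insert_nonneg_iff [DecidableEq ι] {A : Finset (n → K)}
    {v : ι → n → K} (hAv : ∀ a ∈ A, ∀ i, 0 ≤ a ⬝ᵥ v i) {x : n → K} {S₀ S : Finset ι} {j : ι}
    (hjS : j ∉ S)
    (hfar : ∀ a ∈ A, 0 < a ⬝ᵥ v j → a ⬝ᵥ ∑ i, v i ≤ a ⬝ᵥ (x - ∑ i ∈ S₀, v i)) :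
    (∀ a ∈ A, 0 ≤ a ⬝ᵥ (x - ∑ i ∈ insert j S, v i)) ↔
      ∀ a ∈ A, 0 ≤ a ⬝ᵥ (x - ∑ i ∈ S, v i) := by
  have hmono : ∀ a ∈ A, ∀ S : Finset ι, 0 ≤ a ⬝ᵥ ∑ i ∈ S, v i ∧
      a ⬝ᵥ ∑ i ∈ S, v i ≤ a ⬝ᵥ ∑ i, v i := fun a ha S => by
    simp only [dotProduct_sum]
    exact ⟨Finset.sum_nonneg fun i _ => hAv a ha i, Finset.sum_le_sum_of_subset_of_nonneg
      (Finset.subset_univ S) fun i _ _ => hAv a ha i⟩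
  rw [Finset.sum_insert hjS]
  refine ⟨fun h a ha => ?_, fun h a ha => ?_⟩
  · have := h a ha
    simp only [dotProduct_sub, dotProduct_add] at this ⊢
    linarith [hAv a ha j]
  · rcases (hAv a ha j).eq_or_lt with hzero | hpos
    · simpa [dotProduct_sub, dotProduct_add, ← hzero] using h a ha
    · -- `a` is far from `x - ∑ S₀`, so subtracting `v j` and any subset sum stays on its side
      have h₁ := hfar a ha hpos
      have h₂ := hmono a ha S₀
      have h₃ := hmono a ha (insert j S)
      simp only [dotProduct_sub, dotProduct_add, Finset.sum_insert hjS] at h₁ h₃ ⊢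
      linarith

end Geometry

lemma finite_setOf_forall_abs_intCast_le {K n : Type*} [Field K] [LinearOrder K]
    [IsStrictOrderedRing K] [FloorRing K] [Finite n] (N : n → K) :
    {y : n → ℤ | ∀ c, |(y c : K)| ≤ N c}.Finite := by
  refine (Set.Finite.pi fun c => Set.finite_Icc (-⌈N c⌉) ⌈N c⌉).subset fun y hy c _ => ?_
  have : |y c| ≤ ⌈N c⌉ := by
    exact_mod_cast (Int.cast_abs (R := K) ▸ hy c).trans (Int.le_ceil (N c))
  exact abs_le.mp this

theorem support_conv_prod_indicator_finiteCone_finite {d : ℕ} {ι : Type*} [Fintype ι]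
    (v : ι → Fin d → ℤ) (t : Finset ι) (ht : ∀ i, v i ≠ 0 → i ∈ t)
    (A : Finset (Fin d → ℚ))
    (hA : ∀ x, x ∈ finiteCone (fun i j => (v i j : ℚ)) ↔ ∀ a ∈ A, 0 ≤ a ⬝ᵥ x) :
    (Function.support (conv (∏ i ∈ t, (1 - expn (v i)))
      ({x | (fun j => (x j : ℚ)) ∈ finiteCone fun i j => (v i j : ℚ)}.indicator 1))).Finite := by
  classical
  set vq : ι → Fin d → ℚ := fun i j => (v i j : ℚ)
  have hcast : ∀ (x : Fin d → ℤ) (S : Finset ι),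
      (fun j => ((x - ∑ i ∈ S, v i) j : ℚ)) = (fun j => (x j : ℚ)) - ∑ i ∈ S, vq i := by
    intro x S; funext j; simp [vq, Finset.sum_apply]
  have hAv : ∀ a ∈ A, ∀ i, 0 ≤ a ⬝ᵥ vq i := fun a ha i =>
    (hA (vq i)).1 (mem_finiteCone_self vq i) a ha
  obtain ⟨N, hN⟩ := exists_bound_of_forall_exists_dotProduct_lt hAv (∑ i, vq i)
  refine ((finite_setOf_forall_abs_intCast_le N).add
    (t.powerset.image fun S => ∑ i ∈ S, v i).finite_toSet).subset fun x hx => ?_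
  rw [Function.mem_support, conv_prod_one_sub_expn] at hx
  obtain ⟨S₀, hS₀, hne⟩ := Finset.exists_ne_zero_of_sum_ne_zero hx
  have hy : (fun j => (x j : ℚ)) - ∑ i ∈ S₀, vq i ∈ finiteCone vq := by
    by_contra h
    simp only [Set.indicator_apply, Set.mem_ofPred_eq, hcast, if_neg h, mul_zero] at hne
    exact hne rfl
  refine ⟨x - ∑ i ∈ S₀, v i, fun c => ?_, ∑ i ∈ S₀, v i,
    by simpa using ⟨S₀, Finset.mem_powerset.mp hS₀, rfl⟩, sub_add_cancel _ _⟩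
  show |(fun j => ((x - ∑ i ∈ S₀, v i) j : ℚ)) c| ≤ N c
  rw [hcast]
  refine hN _ hy (fun j hj => ?_) c
  by_contra! hfar
  have hjt : j ∈ t := ht j fun h => hj (funext fun k => by simp [vq, h])
  refine hx (Finset.sum_powerset_neg_one_pow_card_mul_eq_zero hjt _ fun S hS => ?_)
  have hjS : j ∉ S := fun h => Finset.notMem_erase j t (hS h)
  simp only [Set.indicator_apply, Set.mem_ofPred_eq, hcast, hA, Pi.one_apply,
    forall_dotProduct_sub_sum_insert_nonneg_iff hAv hjS hfar]

theorem indicator_cone_summable_general {d : ℕ} (s : ℕ) (v : Fin s → (Fin d → ℤ))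
    (C : Set (Fin d → ℚ))
    (hC : C = {x : Fin d → ℚ | ∃ t : Fin s → ℚ,
      (∀ i, 0 ≤ t i) ∧ x = ∑ i, t i • (fun j => ((v i j : ℚ)))})
    (f : (Fin d → ℤ) → ℚ)
    (hf : f = Set.indicator {x : Fin d → ℤ | (fun j => ((x j : ℚ))) ∈ C} 1) :
    ∃ (r : ℕ) (m : Fin r → (Fin d → ℤ)), (∀ i, m i ≠ 0) ∧
      (Function.support (conv (∏ i, (1 - expn (m i))) f)).Finite := by
  classical
  subst hC hf
  obtain ⟨A, hA⟩ := exists_finset_mem_finiteCone_iff s fun i j => (v i j : ℚ)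
  set t := Finset.univ.filter fun i => v i ≠ 0
  refine ⟨t.card, fun k => v (t.equivFin.symm k),
    fun k => (Finset.mem_filter.mp (t.equivFin.symm k).2).2, ?_⟩
  rw [t.equivFin.symm.prod_comp fun i : t => 1 - expn (v i),
    Finset.prod_coe_sort t fun i => 1 - expn (v i)]
  exact support_conv_prod_indicator_finiteCone_finite v t (fun i hi => by simpa [t] using hi) A hA

/-- Lemma 9.3: for the rational polyhedral cone `C ⊆ ℚ^d` generated by lattice vectors
`v_1, …, v_s ∈ ℤ^d`, the indicator function of the lattice points of `C` is summable:
some product `∏ (1 - e^{m_i})`, with all `m_i ≠ 0`, convolves it to a finitely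
supported function. -/
theorem indicator_cone_summable {d : ℕ} (hd : 1 ≤ d) (s : ℕ) (v : Fin s → (Fin d → ℤ))
    (C : Set (Fin d → ℚ))
    (hC : C = {x : Fin d → ℚ | ∃ t : Fin s → ℚ,
      (∀ i, 0 ≤ t i) ∧ x = ∑ i, t i • (fun j => ((v i j : ℚ)))})
    (f : (Fin d → ℤ) → ℚ)
    (hf : f = Set.indicator {x : Fin d → ℤ | (fun j => ((x j : ℚ))) ∈ C} 1) :
    ∃ (r : ℕ) (m : Fin r → (Fin d → ℤ)), (∀ i, m i ≠ 0) ∧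
      (Function.support (conv (∏ i, (1 - expn (m i))) f)).Finite :=
  indicator_cone_summable_general s v C hC f hf
end
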